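/- Let m be even and let f be a bent function in m variables. For each b ∈ 𝔽₂^m∖{0} define f_b(x) = f(x+b) + f(x) + f(b) and the block B_b = {p ∈ 𝔽₂^m∖{0} : f_b(p) = 1}. Then: (1) 2·|B_b| = 2^m − 1 + (−1)^{f(0)} for every b ∈ 𝔽₂^m∖{0}; (2) for every pair of distinct points p, q ∈ 𝔽₂^m∖{0}, 2·|{b ∈ 𝔽₂^m∖{0} : p ∈ B_b and q ∈ B_b}| = 2^{m−1} − 1 + (−1)^{f(0)}. Hence the pair (𝔽₂^m∖{0}, {B_b : b ∈ 𝔽₂^m∖{0}}) is a symmetric 2-(2^m−1, (2^m−1+(−1)^{f(0)})/2, (2^{m−1}−1+(−1)^{f(0)})/2) design. -/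
import Mathlib


open Finset

/-- dot product on 𝔽₂^m -/
def dotp {m : ℕ} (a x : Fin m → ZMod 2) : ZMod 2 := ∑ i, a i * x i

/-- (−1)^a for a ∈ 𝔽₂, as an integer -/
def sgn (a : ZMod 2) : ℤ := if a = 0 then 1 else -1

/-- Walsh transform of f on a finite subset P of 𝔽₂^m -/
def walsh {m : ℕ} (P : Finset (Fin m → ZMod 2)) (f : (Fin m → ZMod 2) → ZMod 2)
    (u : Fin m → ZMod 2) : ℤ :=
  ∑ x ∈ P, sgn (f x + dotp u x)

/-- Walsh transform of f on all of 𝔽₂^m -/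
def walshF {m : ℕ} (f : (Fin m → ZMod 2) → ZMod 2) (u : Fin m → ZMod 2) : ℤ :=
  walsh Finset.univ f u


/-- The block B_b = {p ∈ 𝔽₂^m∖{0} : f(p+b) + f(p) + f(b) = 1}. -/
def derBlock {m : ℕ} (f : (Fin m → ZMod 2) → ZMod 2) (b : Fin m → ZMod 2) :
    Finset (Fin m → ZMod 2) :=
  Finset.univ.filter (fun p => p ≠ 0 ∧ f (p + b) + f p + f b = 1)

lemma sgn_add' : ∀ a b : ZMod 2, sgn (a + b) = sgn a * sgn b := by decide

lemma zadd_self : ∀ a : ZMod 2, a + a = 0 := by decide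

lemma vadd_self {m : ℕ} (a : Fin m → ZMod 2) : a + a = 0 :=
  funext fun i => zadd_self (a i)

lemma dotp_add_left {m : ℕ} (a b x : Fin m → ZMod 2) :
    dotp (a + b) x = dotp a x + dotp b x := by
  simp [dotp, add_mul, Finset.sum_add_distrib]

lemma dotp_add_right {m : ℕ} (a x y : Fin m → ZMod 2) :
    dotp a (x + y) = dotp a x + dotp a y := by
  simp [dotp, mul_add, Finset.sum_add_distrib]

lemma card_univ_fun (m : ℕ) : ((Finset.univ : Finset (Fin m → ZMod 2)).card : ℤ) = 2 ^ m := by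
  simp [Finset.card_univ]

lemma vadd_eq_zero_iff {m : ℕ} (a b : Fin m → ZMod 2) : a + b = 0 ↔ a = b := by
  constructor
  · intro h; funext i
    exact (by decide : ∀ x y : ZMod 2, x + y = 0 → x = y) _ _ (congrFun h i)
  · rintro rfl; exact vadd_self a

lemma sum_sgn_dotp {m : ℕ} (v : Fin m → ZMod 2) :
    ∑ u : Fin m → ZMod 2, sgn (dotp u v) = if v = 0 then 2 ^ m else 0 := by
  by_cases hv : v = 0
  · subst hv
    rw [if_pos rfl]
    have : ∀ u : Fin m → ZMod 2, sgn (dotp u 0) = 1 := by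
      intro u; simp [dotp, sgn]
    simp_rw [this]
    rw [Finset.sum_const, nsmul_eq_mul, mul_one, card_univ_fun]
  · rw [if_neg hv]
    obtain ⟨i, hi⟩ : ∃ i, v i = 1 := by
      by_contra h
      push_neg at h
      apply hv; funext i
      exact (by decide : ∀ x : ZMod 2, x ≠ 1 → x = 0) _ (h i)
    have key : ∀ u : Fin m → ZMod 2,
        sgn (dotp (u + Pi.single i 1) v) = - sgn (dotp u v) := by
      intro u
      have h1 : dotp (Pi.single i (1 : ZMod 2)) v = 1 := by
        rw [dotp, Finset.sum_eq_single i]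
        · simp [hi]
        · intro j _ hj; simp [Pi.single_eq_of_ne hj]
        · simp
      rw [dotp_add_left, h1, sgn_add']
      simp [sgn]
    have h2 := Equiv.sum_comp (Equiv.addRight (Pi.single i (1 : ZMod 2)))
      (fun u => sgn (dotp u v))
    simp only [Equiv.coe_addRight] at h2
    simp_rw [key] at h2
    rw [Finset.sum_neg_distrib] at h2
    linarith

lemma eqadd {m : ℕ} (x y v : Fin m → ZMod 2) : x + y + v = 0 ↔ y = x + v := by
  rw [vadd_eq_zero_iff]
  constructor
  · intro h
    rw [← h, show x + (x + y) = (x + x) + y from by ring, vadd_self, zero_add]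
  · intro h
    rw [h, show x + (x + v) = (x + x) + v from by ring, vadd_self, zero_add]

lemma autocorr {m : ℕ} (f : (Fin m → ZMod 2) → ZMod 2)
    (hbent : ∀ a, (walshF f a) ^ 2 = 2 ^ m)
    (v : Fin m → ZMod 2) (hv : v ≠ 0) :
    ∑ x : Fin m → ZMod 2, sgn (f (x + v) + f x) = 0 := by
  have T0 : ∑ u : Fin m → ZMod 2, (walshF f u) ^ 2 * sgn (dotp u v) = 0 := by
    simp_rw [hbent]
    rw [← Finset.mul_sum, sum_sgn_dotp, if_neg hv, mul_zero]
  have expand : ∀ u, (walshF f u) ^ 2 * sgn (dotp u v)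
      = ∑ x : Fin m → ZMod 2, ∑ y : Fin m → ZMod 2,
          sgn (f x + f y) * sgn (dotp u (x + y + v)) := by
    intro u
    rw [sq, walshF, walsh, Finset.sum_mul_sum, Finset.sum_mul]
    refine Finset.sum_congr rfl fun x _ => ?_
    rw [Finset.sum_mul]
    refine Finset.sum_congr rfl fun y _ => ?_
    rw [← sgn_add', ← sgn_add', dotp_add_right, dotp_add_right, ← sgn_add']
    congr 1
    ring
  simp_rw [expand] at T0
  rw [Finset.sum_comm] at T0
  have swap2 : ∀ x : Fin m → ZMod 2,
      ∑ u : Fin m → ZMod 2, ∑ y : Fin m → ZMod 2,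
        sgn (f x + f y) * sgn (dotp u (x + y + v))
      = sgn (f x + f (x + v)) * 2 ^ m := by
    intro x
    rw [Finset.sum_comm]
    have inner : ∀ y : Fin m → ZMod 2,
        ∑ u : Fin m → ZMod 2, sgn (f x + f y) * sgn (dotp u (x + y + v))
        = if y = x + v then sgn (f x + f (x + v)) * 2 ^ m else 0 := by
      intro y
      rw [← Finset.mul_sum, sum_sgn_dotp]
      simp only [eqadd]
      by_cases h : y = x + v
      · subst h; simp
      · simp [h]
    simp_rw [inner]
    simp
  simp_rw [swap2] at T0
  rw [← Finset.sum_mul] at T0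
  have h2 : ((2:ℤ) ^ m) ≠ 0 := by positivity
  have := mul_eq_zero.mp T0
  rcases this with h | h
  · rw [← h]
    congr 1; funext x; congr 1; ring
  · exact absurd h h2

lemma sum_sgn_eq {m : ℕ} (g : (Fin m → ZMod 2) → ZMod 2) :
    ∑ x : Fin m → ZMod 2, sgn (g x)
      = 2 ^ m - 2 * ((univ.filter fun x => g x = 1).card : ℤ) := by
  have h : ∀ a : ZMod 2, sgn a = 1 - 2 * (if a = 1 then (1:ℤ) else 0) := by decide
  simp_rw [h]
  rw [Finset.sum_sub_distrib, Finset.sum_const, ← Finset.mul_sum, Finset.sum_boole]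
  simp [card_univ_fun]

lemma card_filter_split {m : ℕ} (P : (Fin m → ZMod 2) → Prop) [DecidablePred P] :
    (univ.filter P).card
      = (univ.filter fun x => x ≠ 0 ∧ P x).card + (if P 0 then 1 else 0) := by
  rw [← Finset.card_filter_add_card_filter_not (s := univ.filter P)
      (p := fun x => x ≠ 0)]
  congr 1
  · rw [Finset.filter_filter]
    congr 1
    apply Finset.filter_congr
    intro x _
    tauto
  · have he : ((univ.filter P).filter (fun x => ¬ x ≠ 0)) = if P 0 then {0} else ∅ := by
      ext x
      simp only [Finset.mem_filter, Finset.mem_univ, true_and, not_not]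
      constructor
      · rintro ⟨hPx, rfl⟩; simp [hPx]
      · intro hx
        by_cases h : P 0
        · rw [if_pos h] at hx; simp only [Finset.mem_singleton] at hx
          subst hx; exact ⟨h, rfl⟩
        · rw [if_neg h] at hx; simp at hx
    rw [he]
    split_ifs <;> simp

lemma part1 {m : ℕ} (f : (Fin m → ZMod 2) → ZMod 2)
    (hbent : ∀ a, (walshF f a) ^ 2 = 2 ^ m) (b : Fin m → ZMod 2) (hb : b ≠ 0) :
    2 * ((derBlock f b).card : ℤ) = 2 ^ m - 1 + sgn (f 0) := by
  have hsum : ∑ x : Fin m → ZMod 2, sgn (f (x + b) + f x + f b) = 0 := by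
    have h : ∀ x : Fin m → ZMod 2,
        sgn (f (x + b) + f x + f b) = sgn (f (x + b) + f x) * sgn (f b) :=
      fun x => sgn_add' _ _
    simp_rw [h, ← Finset.sum_mul, autocorr f hbent b hb, zero_mul]
  have hc := sum_sgn_eq (fun x => f (x + b) + f x + f b)
  rw [hsum] at hc
  have hsplit := card_filter_split (fun x => f (x + b) + f x + f b = 1)
  have h0 : f (0 + b) + f 0 + f b = f 0 := by
    rw [zero_add]; exact (by decide : ∀ a c : ZMod 2, a + c + a = c) _ _
  have hd : derBlock f b = univ.filter fun x => x ≠ 0 ∧ f (x + b) + f x + f b = 1 := rfl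
  rw [hd]
  simp only [h0] at hsplit
  have h01 : f 0 = 0 ∨ f 0 = 1 := (by decide : ∀ a : ZMod 2, a = 0 ∨ a = 1) _
  rcases h01 with h | h
  · rw [h] at hsplit
    simp only [if_neg (by decide : ¬ (0:ZMod 2) = 1), add_zero] at hsplit
    rw [← hsplit, h, show sgn (0:ZMod 2) = 1 from by decide]
    linarith
  · rw [h] at hsplit
    simp only [if_pos rfl] at hsplit
    have hz : ((univ.filter fun x : Fin m → ZMod 2 => f (x + b) + f x + f b = 1).card : ℤ)
        = ((univ.filter fun x : Fin m → ZMod 2 =>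
            x ≠ 0 ∧ f (x + b) + f x + f b = 1).card : ℤ) + 1 := by
      exact_mod_cast hsplit
    rw [h, show sgn (1:ZMod 2) = -1 from by decide]
    linarith

lemma deriv_sum_zero {m : ℕ} (f : (Fin m → ZMod 2) → ZMod 2)
    (hbent : ∀ a, (walshF f a) ^ 2 = 2 ^ m) (v : Fin m → ZMod 2) (hv : v ≠ 0) :
    ∑ b : Fin m → ZMod 2, sgn (f (v + b) + f v + f b) = 0 := by
  have h : ∀ b : Fin m → ZMod 2,
      sgn (f (v + b) + f v + f b) = sgn (f (b + v) + f b) * sgn (f v) := by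
    intro b
    rw [show f (v + b) + f v + f b = (f (v + b) + f b) + f v from by ring, sgn_add',
      add_comm v b]
  simp_rw [h, ← Finset.sum_mul, autocorr f hbent v hv, zero_mul]

lemma cross_sum_zero {m : ℕ} (f : (Fin m → ZMod 2) → ZMod 2)
    (hbent : ∀ a, (walshF f a) ^ 2 = 2 ^ m) (p q : Fin m → ZMod 2) (hpq : p ≠ q) :
    ∑ b : Fin m → ZMod 2, sgn (f (p + b) + f (q + b)) = 0 := by
  have hv : p + q ≠ 0 := fun h => hpq ((vadd_eq_zero_iff p q).mp h)
  have h2 := Equiv.sum_comp (Equiv.addRight q) (fun b => sgn (f (p + b) + f (q + b)))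
  simp only [Equiv.coe_addRight] at h2
  rw [← h2]
  have h3 : ∀ b : Fin m → ZMod 2,
      sgn (f (p + (b + q)) + f (q + (b + q))) = sgn (f (b + (p + q)) + f b) := by
    intro b
    rw [show p + (b + q) = b + (p + q) from by ring,
        show q + (b + q) = b + (q + q) from by ring, vadd_self, add_zero]
  simp_rw [h3]
  exact autocorr f hbent (p + q) hv

lemma part2 {m : ℕ} (f : (Fin m → ZMod 2) → ZMod 2)
    (hbent : ∀ a, (walshF f a) ^ 2 = 2 ^ m) (p q : Fin m → ZMod 2)
    (hp : p ≠ 0) (hq : q ≠ 0) (hpq : p ≠ q) :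
    2 * ((Finset.univ.filter
        (fun b => b ≠ 0 ∧ p ∈ derBlock f b ∧ q ∈ derBlock f b)).card : ℤ)
      = 2 ^ (m - 1) - 1 + sgn (f 0) := by
  have hm0 : m ≠ 0 := by rintro rfl; exact hp (funext fun i => i.elim0)
  have h2m : (2:ℤ) ^ m = 2 * 2 ^ (m - 1) := by
    conv_lhs => rw [show m = (m - 1) + 1 from by omega]
    rw [pow_succ]; ring
  have hfil : (univ.filter
      (fun b : Fin m → ZMod 2 => b ≠ 0 ∧ p ∈ derBlock f b ∧ q ∈ derBlock f b))
      = univ.filter (fun b => b ≠ 0 ∧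
          (f (p + b) + f p + f b = 1 ∧ f (q + b) + f q + f b = 1)) := by
    apply Finset.filter_congr
    intro b _
    simp [derBlock, hp, hq]
  rw [hfil]
  have key : ∑ b : Fin m → ZMod 2,
      (1 - sgn (f (p + b) + f p + f b)) * (1 - sgn (f (q + b) + f q + f b)) = 2 ^ m := by
    have expand : ∀ b : Fin m → ZMod 2,
        (1 - sgn (f (p + b) + f p + f b)) * (1 - sgn (f (q + b) + f q + f b))
        = 1 - sgn (f (p + b) + f p + f b) - sgn (f (q + b) + f q + f b)
          + sgn (f (p + b) + f p + f b) * sgn (f (q + b) + f q + f b) := by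
      intro b; ring
    simp_rw [expand]
    rw [Finset.sum_add_distrib, Finset.sum_sub_distrib, Finset.sum_sub_distrib]
    rw [deriv_sum_zero f hbent p hp, deriv_sum_zero f hbent q hq]
    have hprod : ∑ b : Fin m → ZMod 2,
        sgn (f (p + b) + f p + f b) * sgn (f (q + b) + f q + f b) = 0 := by
      have h : ∀ b : Fin m → ZMod 2,
          sgn (f (p + b) + f p + f b) * sgn (f (q + b) + f q + f b)
          = sgn (f (p + b) + f (q + b)) * sgn (f p + f q) := by
        intro b
        rw [← sgn_add', ← sgn_add']
        congr 1
        have hb : f b + f b = 0 := zadd_self _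
        calc f (p + b) + f p + f b + (f (q + b) + f q + f b)
            = (f (p + b) + f (q + b)) + (f p + f q) + (f b + f b) := by ring
          _ = (f (p + b) + f (q + b)) + (f p + f q) := by rw [hb, add_zero]
      simp_rw [h, ← Finset.sum_mul, cross_sum_zero f hbent p q hpq, zero_mul]
    rw [hprod]
    simp [Finset.sum_const, card_univ_fun]
  have ind : ∀ a c : ZMod 2, (1 - sgn a) * (1 - sgn c)
      = if a = 1 ∧ c = 1 then (4:ℤ) else 0 := by decide
  simp_rw [ind] at key
  rw [Finset.sum_ite, Finset.sum_const, Finset.sum_const, smul_zero, add_zero,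
    nsmul_eq_mul] at key
  have hsplit := card_filter_split
    (fun b : Fin m → ZMod 2 => f (p + b) + f p + f b = 1 ∧ f (q + b) + f q + f b = 1)
  have h00 : (f (p + 0) + f p + f 0 = 1 ∧ f (q + 0) + f q + f 0 = 1) ↔ (f 0 = 1) := by
    have e : ∀ a c : ZMod 2, a + a + c = c := by decide
    rw [add_zero, add_zero, e (f p) (f 0), e (f q) (f 0)]
    tauto
  simp only [h00] at hsplit
  have h01 : f 0 = 0 ∨ f 0 = 1 := (by decide : ∀ a : ZMod 2, a = 0 ∨ a = 1) _
  rcases h01 with h | h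
  · rw [h] at hsplit
    simp only [if_neg (by decide : ¬ (0:ZMod 2) = 1), add_zero] at hsplit
    rw [hsplit] at key
    rw [h, show sgn (0:ZMod 2) = 1 from by decide]
    linarith
  · rw [h] at hsplit
    simp only [if_pos rfl] at hsplit
    have hz := congrArg (Nat.cast : ℕ → ℤ) hsplit
    push_cast at hz
    rw [hz] at key
    rw [h, show sgn (1:ZMod 2) = -1 from by decide]
    linarith

theorem stmt_16 (m : ℕ) (hm : Even m) (f : (Fin m → ZMod 2) → ZMod 2)
    (hbent : ∀ a, (walshF f a) ^ 2 = 2 ^ m) :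
    (∀ b : Fin m → ZMod 2, b ≠ 0 →
      2 * ((derBlock f b).card : ℤ) = 2 ^ m - 1 + sgn (f 0)) ∧
    (∀ p q : Fin m → ZMod 2, p ≠ 0 → q ≠ 0 → p ≠ q →
      2 * ((Finset.univ.filter
          (fun b => b ≠ 0 ∧ p ∈ derBlock f b ∧ q ∈ derBlock f b)).card : ℤ)
        = 2 ^ (m - 1) - 1 + sgn (f 0)) := by
  exact ⟨fun b hb => part1 f hbent b hb,
    fun p q hp hq hpq => part2 f hbent p q hp hq hpq⟩
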